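/- Let ρ(z,w) = (1−|w|²)^p · exp(−(2|z|² + z²w̄ + z̄²w)/(2(1−|w|²))). Then ρ satisfies (w²·∂/∂w − ∂/∂w̄)ρ = (z²/2 + p·w − z·w·∂/∂z)ρ and 2(w·∂/∂w − w̄·∂/∂w̄)ρ = (z̄·∂/∂z̄ − z·∂/∂z)ρ. -/

import Mathlib

open ComplexConjugate

/-- Wirtinger derivative `∂/∂z = (1/2)(∂/∂x − i ∂/∂y)` of `f : ℂ → ℂ`,
viewed as a real-differentiable map. -/
noncomputable def Dz (f : ℂ → ℂ) (z : ℂ) : ℂ :=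
  (1 / 2) * (fderiv ℝ f z 1 - Complex.I * fderiv ℝ f z Complex.I)

/-- Wirtinger derivative `∂/∂z̄ = (1/2)(∂/∂x + i ∂/∂y)`. -/
noncomputable def Dzbar (f : ℂ → ℂ) (z : ℂ) : ℂ :=
  (1 / 2) * (fderiv ℝ f z 1 + Complex.I * fderiv ℝ f z Complex.I)

/-- `ρ(z,w) = (1−|w|²)^p exp(−(2|z|² + z²w̄ + z̄²w)/(2(1−|w|²)))`
(the quantity `z²w̄ + z̄²w` is real, so we take its real part). -/
noncomputable def rho (p : ℝ) (z w : ℂ) : ℝ :=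
  (1 - ‖w‖ ^ 2) ^ p *
    Real.exp (-((2 * ‖z‖ ^ 2 + (z ^ 2 * conj w + (conj z) ^ 2 * w).re) /
      (2 * (1 - ‖w‖ ^ 2))))

/-! If the real differential of `f` at `z` is `h ↦ a h + b h̄`, then `∂f = a` and `∂̄f = b`.
On the unit disc `ρ = exp φ` with `φ = p log(1 - w w̄) - (2 z z̄ + z² w̄ + z̄² w) / (2 (1 - w w̄))`,
so `∂ρ = ρ ∂φ` and `∂̄ρ = ρ ∂̄φ`; after dividing by `ρ`, both identities become rational identities
in `z, z̄, w, w̄` with denominators powers of `1 - w w̄`. -/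

noncomputable def wirtingerCLM (a b : ℂ) : ℂ →L[ℝ] ℂ :=
  a • ContinuousLinearMap.id ℝ ℂ + b • (Complex.conjCLE : ℂ →L[ℝ] ℂ)

@[simp]
lemma wirtingerCLM_apply (a b h : ℂ) : wirtingerCLM a b h = a * h + b * conj h := rfl

lemma smul_wirtingerCLM (c a b : ℂ) : c • wirtingerCLM a b = wirtingerCLM (c * a) (c * b) := by
  ext h
  simp only [smul_apply, wirtingerCLM_apply, smul_eq_mul]
  ring

section Wirtinger

variable {f : ℂ → ℂ} {a b z : ℂ}

lemma Dz_eq_of_hasFDerivAt (hf : HasFDerivAt f (wirtingerCLM a b) z) : Dz f z = a := by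
  simp only [Dz, hf.fderiv, wirtingerCLM_apply, map_one, Complex.conj_I]
  linear_combination (-(1 : ℂ) / 2 * a + 1 / 2 * b) * Complex.I_sq

lemma Dzbar_eq_of_hasFDerivAt (hf : HasFDerivAt f (wirtingerCLM a b) z) : Dzbar f z = b := by
  simp only [Dzbar, hf.fderiv, wirtingerCLM_apply, map_one, Complex.conj_I]
  linear_combination (1 / 2 * a - (1 : ℂ) / 2 * b) * Complex.I_sq

end Wirtinger

lemma hasFDerivAt_id_wirtingerCLM (z : ℂ) : HasFDerivAt (fun z : ℂ => z) (wirtingerCLM 1 0) z := by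
  refine (hasFDerivAt_id (𝕜 := ℝ) z).congr_fderiv ?_
  ext h
  simp

lemma hasFDerivAt_conj_wirtingerCLM (z : ℂ) :
    HasFDerivAt (fun z => conj z) (wirtingerCLM 0 1) z := by
  refine (Complex.conjCLE : ℂ ≃L[ℝ] ℂ).hasFDerivAt.congr_fderiv ?_
  ext h
  simp

lemma one_sub_mul_conj_mem_slitPlane {w : ℂ} (hw : ‖w‖ < 1) :
    1 - w * conj w ∈ Complex.slitPlane := by
  rw [Complex.mul_conj']
  exact_mod_cast Complex.ofReal_mem_slitPlane.2 (by nlinarith [norm_nonneg w])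

noncomputable def rhoExponent (p : ℝ) (z w : ℂ) : ℂ :=
  p * Complex.log (1 - w * conj w) -
    (2 * z * conj z + z ^ 2 * conj w + conj z ^ 2 * w) / (2 * (1 - w * conj w))

lemma ofReal_rho (p : ℝ) (z : ℂ) {w : ℂ} (hw : ‖w‖ < 1) :
    ((rho p z w : ℝ) : ℂ) = Complex.exp (rhoExponent p z w) := by
  have hT_pos : 0 < 1 - ‖w‖ ^ 2 := by nlinarith [norm_nonneg w]
  have hM : (((z ^ 2 * conj w + conj z ^ 2 * w).re : ℝ) : ℂ) = z ^ 2 * conj w + conj z ^ 2 * w := by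
    rw [← Complex.conj_eq_iff_re]
    simp only [map_add, map_mul, map_pow, Complex.conj_conj]
    ring
  rw [rho, Real.rpow_def_of_pos hT_pos, ← Real.exp_add, Complex.ofReal_exp, rhoExponent]
  congr 1
  push_cast
  rw [Complex.ofReal_log hT_pos.le, hM]
  push_cast
  rw [mul_assoc 2 z, Complex.mul_conj', Complex.mul_conj']
  ring

lemma eventuallyEq_ofReal_rho (p : ℝ) (z : ℂ) {w : ℂ} (hw : ‖w‖ < 1) :
    (fun w' => ((rho p z w' : ℝ) : ℂ)) =ᶠ[nhds w] fun w' => Complex.exp (rhoExponent p z w') :=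
  ((isOpen_lt continuous_norm continuous_const).eventually_mem hw).mono
    fun _ hw' => ofReal_rho p z hw'

lemma hasFDerivAt_rhoExponent_left (p : ℝ) (z w : ℂ) :
    HasFDerivAt (fun z' => rhoExponent p z' w)
      (wirtingerCLM (-(conj z + z * conj w) / (1 - w * conj w))
        (-(z + conj z * w) / (1 - w * conj w))) z := by
  have hN : HasFDerivAt (fun z' : ℂ => 2 * z' * conj z' + z' ^ 2 * conj w + conj z' ^ 2 * w)
      (wirtingerCLM (2 * conj z + 2 * z * conj w) (2 * z + 2 * conj z * w)) z := by
    refine ((((hasFDerivAt_id_wirtingerCLM z).const_mul 2).mul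
      (hasFDerivAt_conj_wirtingerCLM z)).add
      (((hasFDerivAt_id_wirtingerCLM z).pow 2).mul_const _) |>.add
      (((hasFDerivAt_conj_wirtingerCLM z).pow 2).mul_const _)).congr_fderiv ?_
    ext h
    simp only [Nat.add_one_sub_one, pow_one, nsmul_eq_mul, Nat.cast_ofNat, add_apply, smul_apply,
      wirtingerCLM_apply, zero_mul, one_mul, zero_add, smul_eq_mul, add_zero]
    ring
  simp only [rhoExponent, div_eq_mul_inv]
  refine ((hasFDerivAt_const _ z).sub (hN.mul_const _)).congr_fderiv ?_
  ext h
  simp only [mul_inv_rev, zero_sub, neg_apply, smul_apply, wirtingerCLM_apply, smul_eq_mul,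
    neg_add_rev]
  ring

lemma hasFDerivAt_rhoExponent_right (p : ℝ) (z : ℂ) {w : ℂ} (hw : ‖w‖ < 1) :
    HasFDerivAt (fun w' => rhoExponent p z w')
      (wirtingerCLM
        (-p * conj w / (1 - w * conj w) - (conj z ^ 2 * (1 - w * conj w) +
          (2 * z * conj z + z ^ 2 * conj w + conj z ^ 2 * w) * conj w) / (2 * (1 - w * conj w) ^ 2))
        (-p * w / (1 - w * conj w) - (z ^ 2 * (1 - w * conj w) +
          (2 * z * conj z + z ^ 2 * conj w + conj z ^ 2 * w) * w) / (2 * (1 - w * conj w) ^ 2)))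
      w := by
  have hT_slit := one_sub_mul_conj_mem_slitPlane hw
  have hT_ne : 1 - w * conj w ≠ 0 := Complex.slitPlane_ne_zero hT_slit
  have hT : HasFDerivAt (fun w' : ℂ => 1 - w' * conj w') (wirtingerCLM (-conj w) (-w)) w := by
    refine ((hasFDerivAt_const 1 w).sub ((hasFDerivAt_id_wirtingerCLM w).mul
      (hasFDerivAt_conj_wirtingerCLM w))).congr_fderiv ?_
    ext h
    simp
  have hN : HasFDerivAt (fun w' : ℂ => 2 * z * conj z + z ^ 2 * conj w' + conj z ^ 2 * w')
      (wirtingerCLM (conj z ^ 2) (z ^ 2)) w := by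
    refine ((hasFDerivAt_const _ w).add ((hasFDerivAt_conj_wirtingerCLM w).const_mul _)).add
      ((hasFDerivAt_id_wirtingerCLM w).const_mul _) |>.congr_fderiv ?_
    ext h
    simp only [zero_add, add_apply, smul_apply, wirtingerCLM_apply, zero_mul, one_mul, smul_eq_mul,
      add_zero]
    ring
  have hlog := (Complex.hasStrictDerivAt_log hT_slit).hasDerivAt.comp_hasFDerivAt w hT
  have hinv :=
    (hasDerivAt_inv (mul_ne_zero two_ne_zero hT_ne)).comp_hasFDerivAt w (hT.const_mul 2)
  simp only [rhoExponent, div_eq_mul_inv]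
  refine ((hlog.const_mul _).sub (hN.mul hinv)).congr_fderiv ?_
  ext h
  simp only [Complex.coe_smul, neg_smul, smul_neg, Function.comp_apply, mul_inv_rev, sub_apply,
    smul_apply, wirtingerCLM_apply, neg_mul, smul_eq_mul, Complex.real_smul, add_apply, neg_apply]
  field_simp
  ring

lemma hasFDerivAt_ofReal_rho_left (p : ℝ) (z : ℂ) {w : ℂ} (hw : ‖w‖ < 1) :
    HasFDerivAt (fun z' => ((rho p z' w : ℝ) : ℂ))
      (wirtingerCLM ((rho p z w : ℂ) * (-(conj z + z * conj w) / (1 - w * conj w)))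
        ((rho p z w : ℂ) * (-(z + conj z * w) / (1 - w * conj w)))) z := by
  simp only [ofReal_rho p _ hw, ← smul_wirtingerCLM]
  exact (hasFDerivAt_rhoExponent_left p z w).cexp

lemma hasFDerivAt_ofReal_rho_right (p : ℝ) (z : ℂ) {w : ℂ} (hw : ‖w‖ < 1) :
    HasFDerivAt (fun w' => ((rho p z w' : ℝ) : ℂ))
      (wirtingerCLM
        ((rho p z w : ℂ) * (-p * conj w / (1 - w * conj w) -
          (conj z ^ 2 * (1 - w * conj w) + (2 * z * conj z + z ^ 2 * conj w + conj z ^ 2 * w) *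
            conj w) / (2 * (1 - w * conj w) ^ 2)))
        ((rho p z w : ℂ) * (-p * w / (1 - w * conj w) -
          (z ^ 2 * (1 - w * conj w) + (2 * z * conj z + z ^ 2 * conj w + conj z ^ 2 * w) *
            w) / (2 * (1 - w * conj w) ^ 2))))
      w := by
  rw [ofReal_rho p z hw, ← smul_wirtingerCLM]
  exact (hasFDerivAt_rhoExponent_right p z hw).cexp.congr_of_eventuallyEq
    (eventuallyEq_ofReal_rho p z hw)

theorem stmt_10 (p : ℝ) (z w : ℂ) (hw : ‖w‖ < 1) :
    (w ^ 2 * Dz (fun w' => ((rho p z w' : ℝ) : ℂ)) w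
        - Dzbar (fun w' => ((rho p z w' : ℝ) : ℂ)) w =
      (z ^ 2 / 2 + (p : ℂ) * w) * ((rho p z w : ℝ) : ℂ)
        - z * w * Dz (fun z' => ((rho p z' w : ℝ) : ℂ)) z) ∧
    (2 * (w * Dz (fun w' => ((rho p z w' : ℝ) : ℂ)) w
        - conj w * Dzbar (fun w' => ((rho p z w' : ℝ) : ℂ)) w) =
      conj z * Dzbar (fun z' => ((rho p z' w : ℝ) : ℂ)) z
        - z * Dz (fun z' => ((rho p z' w : ℝ) : ℂ)) z) := by
  have hT : 1 - w * conj w ≠ 0 := Complex.slitPlane_ne_zero (one_sub_mul_conj_mem_slitPlane hw)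
  have hρz := hasFDerivAt_ofReal_rho_left p z hw
  have hρw := hasFDerivAt_ofReal_rho_right p z hw
  rw [Dz_eq_of_hasFDerivAt hρz, Dzbar_eq_of_hasFDerivAt hρz, Dz_eq_of_hasFDerivAt hρw,
    Dzbar_eq_of_hasFDerivAt hρw]
  constructor
  · field_simp
    ring
  · field_simp
    ring
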